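/- There exists a convex set of zero volume (a square) inscribed in the rhombic dodecahedron D₃ circumscribing the unit sphere, i.e., a planar square contained in D₃ that touches all twelve faces of D₃. -/

import Mathlib

open RealInnerProductSpace MeasureTheory

/-- The A₃ root system: the 12 unit vectors that are permutations of `(±1/√2, ±1/√2, 0)`. -/
def A3roots : Set (EuclideanSpace ℝ (Fin 3)) :=
  {v | ∃ (i j : Fin 3) (s t : ℝ), i ≠ j ∧ (s = 1 ∨ s = -1) ∧ (t = 1 ∨ t = -1) ∧
    v = fun k => if k = i then s / Real.sqrt 2 else if k = j then t / Real.sqrt 2 else 0}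

/-- The rhombic dodecahedron circumscribing the unit sphere: the dual of the difference
body of a regular simplex. -/
def D3 : Set (EuclideanSpace ℝ (Fin 3)) := {x | ∀ v ∈ A3roots, ⟪x, v⟫ ≤ 1}

/-!
The square is the cross-section `x₂ = 0` of `D₃`: its vertices `±√2 e₀`, `±√2 e₁` are vertices
of `D₃`. A point `c e_k` with `|c| ≤ √2` pairs with a root `v` to `c v_k ≤ √2 · (1/√2) = 1`,
and every root has a nonzero coordinate `±1/√2` among its first two, so one of the four vertices
attains `1` on it. Lying in a plane, the square has zero volume.
-/

section InnerProductSpace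

variable {E : Type*} [NormedAddCommGroup E] [InnerProductSpace ℝ E]

theorem convex_setOf_forall_inner_le (S : Set E) (r : ℝ) :
    Convex ℝ {x : E | ∀ v ∈ S, ⟪x, v⟫ ≤ r} := by
  simp only [Set.ofPred_forall]
  exact convex_iInter₂ fun v _ => convex_halfSpace_le ((innerₛₗ ℝ).flip v).isLinear r

theorem exists_square_of_diagonals (p u w : E) (h_inner : ⟪u, w⟫ = 0) (h_norm : ‖u‖ = ‖w‖)
    (hu : u ≠ 0) :
    ∃ a b : E, ⟪a, b⟫ = 0 ∧ ‖a‖ = ‖b‖ ∧ a ≠ 0 ∧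
      ({p + a + b, p + a - b, p - a + b, p - a - b} : Set E) = {p + u, p + w, p - w, p - u} := by
  refine ⟨(1 / 2 : ℝ) • (u + w), (1 / 2 : ℝ) • (u - w), ?_, ?_, ?_, ?_⟩
  · simp only [inner_smul_left, inner_smul_right, inner_add_left, inner_sub_right,
      real_inner_self_eq_norm_sq, real_inner_comm u w, h_inner, h_norm]
    ring
  · rw [norm_smul, norm_smul, ← sq_eq_sq₀ (by positivity) (by positivity), mul_pow, mul_pow,
      norm_add_sq_real, norm_sub_sq_real, h_inner]
    ring
  · intro h
    have : ⟪(1 / 2 : ℝ) • (u + w), u⟫ = 0 := by rw [h, inner_zero_left]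
    simp only [inner_smul_left, inner_add_left, real_inner_comm u w, h_inner,
      real_inner_self_eq_norm_sq] at this
    simp_all
  · refine congrArg₂ _ (by module) (congrArg₂ _ (by module) (congrArg₂ _ (by module)
      (congrArg _ (by module))))

end InnerProductSpace

theorem addHaar_convexHull_eq_zero_of_subset_ker {E : Type*} [NormedAddCommGroup E]
    [NormedSpace ℝ E] [MeasurableSpace E] [BorelSpace E] [FiniteDimensional ℝ E]
    (μ : Measure E) [μ.IsAddHaarMeasure] {f : E →ₗ[ℝ] ℝ} (hf : f ≠ 0) {s : Set E}
    (hs : s ⊆ LinearMap.ker f) : μ (convexHull ℝ s) = 0 :=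
  measure_mono_null (convexHull_min hs (LinearMap.ker f).convex)
    (Measure.addHaar_submodule μ _ (mt LinearMap.ker_eq_top.mp hf))

theorem abs_apply_le_of_mem_A3roots {v : EuclideanSpace ℝ (Fin 3)} (hv : v ∈ A3roots) (k : Fin 3) :
    |v k| ≤ (Real.sqrt 2)⁻¹ := by
  obtain ⟨i, j, s, t, -, hs, ht, hv⟩ := hv
  rw [hv]
  dsimp only
  split_ifs
  · rcases hs with rfl | rfl <;> simp [abs_div, abs_of_nonneg (Real.sqrt_nonneg 2)]
  · rcases ht with rfl | rfl <;> simp [abs_div, abs_of_nonneg (Real.sqrt_nonneg 2)]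
  · simp

theorem single_mem_D3 (k : Fin 3) {c : ℝ} (hc : |c| ≤ Real.sqrt 2) :
    EuclideanSpace.single k c ∈ D3 := fun v hv => by
  rw [EuclideanSpace.inner_single_left, starRingEnd_apply, star_trivial]
  calc c * v k ≤ |c| * |v k| := (le_abs_self _).trans (abs_mul _ _).le
    _ ≤ Real.sqrt 2 * (Real.sqrt 2)⁻¹ :=
      mul_le_mul hc (abs_apply_le_of_mem_A3roots hv k) (abs_nonneg _) (by positivity)
    _ = 1 := mul_inv_cancel₀ (by positivity)

def squareVertices : Set (EuclideanSpace ℝ (Fin 3)) :=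
  {x | ∃ k ≠ 2, ∃ s : ℝ, (s = 1 ∨ s = -1) ∧ x = EuclideanSpace.single k (s * Real.sqrt 2)}

theorem squareVertices_eq : squareVertices =
    {EuclideanSpace.single 0 (Real.sqrt 2), EuclideanSpace.single 1 (Real.sqrt 2),
      -EuclideanSpace.single 1 (Real.sqrt 2), -EuclideanSpace.single 0 (Real.sqrt 2)} := by
  ext x
  simp only [squareVertices, ← PiLp.single_neg, Set.mem_insert_iff, Set.mem_singleton_iff,
    Set.mem_ofPred_eq]
  constructor
  · rintro ⟨k, hk, s, hs | hs, rfl⟩ <;> fin_cases k <;> simp_all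
  · rintro (rfl | rfl | rfl | rfl)
    exacts [⟨0, by decide, 1, by simp⟩, ⟨1, by decide, 1, by simp⟩,
      ⟨1, by decide, -1, by simp⟩, ⟨0, by decide, -1, by simp⟩]

theorem squareVertices_subset_D3 : squareVertices ⊆ D3 := by
  rintro _ ⟨k, -, s, hs, rfl⟩
  exact single_mem_D3 k (by rcases hs with rfl | rfl <;> simp [abs_of_nonneg (Real.sqrt_nonneg 2)])

theorem exists_mem_squareVertices_inner_eq_one {v : EuclideanSpace ℝ (Fin 3)}
    (hv : v ∈ A3roots) : ∃ x ∈ squareVertices, ⟪x, v⟫ = 1 := by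
  obtain ⟨i, j, s, t, hij, hs, ht, hv⟩ := hv
  have key : ∀ r : ℝ, (r = 1 ∨ r = -1) → r * Real.sqrt 2 * (r / Real.sqrt 2) = 1 := by
    rintro r (rfl | rfl) <;> field_simp
  by_cases hi : i = 2
  · refine ⟨_, ⟨j, hi ▸ hij.symm, t, ht, rfl⟩, ?_⟩
    simp [EuclideanSpace.inner_single_left, hv, hij.symm, key t ht]
  · refine ⟨_, ⟨i, hi, s, hs, rfl⟩, ?_⟩
    simp [EuclideanSpace.inner_single_left, hv, key s hs]

theorem squareVertices_subset_ker_proj_two :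
    squareVertices ⊆ LinearMap.ker (EuclideanSpace.proj (2 : Fin 3) : _ →L[ℝ] ℝ).toLinearMap := by
  rintro _ ⟨k, hk, s, -, rfl⟩
  simp [hk]

/-- There is a planar square of zero volume inscribed in the rhombic dodecahedron,
touching all twelve faces. -/
theorem exists_square_inscribed_in_rhombic_dodecahedron :
    ∃ (p a b : EuclideanSpace ℝ (Fin 3)),
      ⟪a, b⟫ = 0 ∧ ‖a‖ = ‖b‖ ∧ a ≠ 0 ∧
      (convexHull ℝ {p + a + b, p + a - b, p - a + b, p - a - b} ⊆ D3) ∧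
      (∀ v ∈ A3roots, ∃ x ∈ convexHull ℝ {p + a + b, p + a - b, p - a + b, p - a - b},
        ⟪x, v⟫ = 1) ∧
      volume (convexHull ℝ ({p + a + b, p + a - b, p - a + b, p - a - b} :
        Set (EuclideanSpace ℝ (Fin 3)))) = 0 := by
  obtain ⟨a, b, hab, hnorm, ha, hverts⟩ := exists_square_of_diagonals 0
    (EuclideanSpace.single (0 : Fin 3) (Real.sqrt 2)) (EuclideanSpace.single 1 (Real.sqrt 2))
    (by simp [EuclideanSpace.inner_single_left]) (by simp) (by simp)
  have hV : ({0 + a + b, 0 + a - b, 0 - a + b, 0 - a - b} : Set (EuclideanSpace ℝ (Fin 3))) =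
      squareVertices := by
    rw [hverts, squareVertices_eq]
    simp only [zero_add, zero_sub]
  refine ⟨0, a, b, hab, hnorm, ha, ?_, fun v hv => ?_, ?_⟩ <;> rw [hV]
  · exact convexHull_min squareVertices_subset_D3 (convex_setOf_forall_inner_le _ _)
  · obtain ⟨x, hx, hxv⟩ := exists_mem_squareVertices_inner_eq_one hv
    exact ⟨x, subset_convexHull ℝ _ hx, hxv⟩
  · refine addHaar_convexHull_eq_zero_of_subset_ker volume ?_ squareVertices_subset_ker_proj_two
    intro h
    simpa using congr($h (EuclideanSpace.single 2 1))
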